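/- arXiv:1303.4245 — 2 statements merged into one kernel-verified Lean document; each statement's English description precedes it below -/
import Mathlib

section
/- Let f : ℝ → ℝ be a 2π-periodic C² function and let q ≥ 1 be an integer. Define the lift G_{r,a} : ℝ → ℝ by G_{r,a}(x) = x + 2πr + a·f(x). Then there exist constants C > 0 and a₀ > 0 (depending only on q and ‖f‖_{C²}) such that for all a with |a| ≤ a₀, all r ∈ ℝ, and all x ∈ ℝ: |G_{r,a}^q(x) − x − 2πrq − a·∑_{k=0}^{q−1} f(x + 2πkr)| ≤ C·a². -/
open Real

noncomputable def circleLift (f : ℝ → ℝ) (r a : ℝ) : ℝ → ℝ := fun x => x + 2 * Real.pi * r + a * f x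

/-!
The `n`-th iterate `yₙ` of `circleLift f r a` satisfies `yₙ = x + 2πrn + a ∑_{k<n} f(yₖ)`, so it
stays within `|a| n sup|f|` of the rotation orbit `x + 2πrk`. Replacing `f(yₖ)` by `f(x + 2πkr)`
therefore costs `|a| · Lip(f) · |a| k sup|f|` at step `k`, and summing gives an `O(a²)` error.
For periodic `C¹` functions both `sup|f|` and `Lip(f)` are finite.
-/

namespace Function.Periodic

variable {f : ℝ → ℝ} {c : ℝ}

theorem deriv (hp : Periodic f c) : Periodic (_root_.deriv f) c := fun x => by
  rw [← deriv_comp_add_const, show (fun y => f (y + c)) = f from funext hp]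

theorem exists_abs_le_of_continuous (hp : Periodic f c) (hc : c ≠ 0) (hf : Continuous f) :
    ∃ M, ∀ x, |f x| ≤ M := by
  obtain ⟨M, hM⟩ := isBounded_iff_forall_norm_le.1 (hp.isBounded_of_continuous hc hf)
  exact ⟨M, fun x => hM _ (Set.mem_range_self x)⟩

theorem exists_lipschitzWith_of_contDiff (hp : Periodic f c) (hc : c ≠ 0)
    (hf : ContDiff ℝ 1 f) : ∃ K, LipschitzWith K f := by
  obtain ⟨M, hM⟩ := hp.deriv.exists_abs_le_of_continuous hc (hf.continuous_deriv le_rfl)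
  refine ⟨M.toNNReal, lipschitzWith_of_nnnorm_deriv_le (hf.differentiable one_ne_zero) fun x => ?_⟩
  rw [← NNReal.coe_le_coe, coe_nnnorm, Real.norm_eq_abs]
  exact (hM x).trans (Real.le_coe_toNNReal M)

end Function.Periodic

namespace circleLift

variable {f : ℝ → ℝ} {M : ℝ}

theorem iterate_sub_rotation_abs_le (hM : ∀ x, |f x| ≤ M) (r a x : ℝ) (n : ℕ) :
    |(circleLift f r a)^[n] x - (x + 2 * π * n * r)| ≤ |a| * n * M := by
  induction n with
  | zero => simp
  | succ n ih =>
    set y := (circleLift f r a)^[n] x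
    have hstep : (circleLift f r a)^[n + 1] x - (x + 2 * π * (n + 1 : ℕ) * r)
        = (y - (x + 2 * π * n * r)) + a * f y := by
      rw [Function.iterate_succ_apply']; simp only [circleLift, y]; push_cast; ring
    calc _ = |(y - (x + 2 * π * n * r)) + a * f y| := by rw [hstep]
      _ ≤ |y - (x + 2 * π * n * r)| + |a| * |f y| := by rw [← abs_mul]; exact abs_add_le _ _
      _ ≤ |a| * n * M + |a| * M := by gcongr; exact hM y
      _ = |a| * (n + 1 : ℕ) * M := by push_cast; ring

theorem iterate_first_order_abs_le {K : NNReal} (hM : ∀ x, |f x| ≤ M) (hK : LipschitzWith K f)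
    (r a x : ℝ) (n : ℕ) :
    |(circleLift f r a)^[n] x - x - 2 * π * r * n
        - a * ∑ k ∈ Finset.range n, f (x + 2 * π * k * r)| ≤ K * M * n ^ 2 * a ^ 2 := by
  have hM0 : 0 ≤ M := (abs_nonneg _).trans (hM 0)
  induction n with
  | zero => simp
  | succ n ih =>
    set y := (circleLift f r a)^[n] x
    set z := x + 2 * π * n * r
    have hstep : (circleLift f r a)^[n + 1] x - x - 2 * π * r * (n + 1 : ℕ)
          - a * ∑ k ∈ Finset.range (n + 1), f (x + 2 * π * k * r)
        = (y - x - 2 * π * r * n - a * ∑ k ∈ Finset.range n, f (x + 2 * π * k * r))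
          + a * (f y - f z) := by
      rw [Function.iterate_succ_apply', Finset.sum_range_succ]
      simp only [circleLift, y, z]; push_cast; ring
    have hlip : |f y - f z| ≤ K * (|a| * n * M) :=
      (hK.dist_le_mul y z).trans (by gcongr; exact iterate_sub_rotation_abs_le hM r a x n)
    rw [hstep]
    calc _ ≤ K * M * n ^ 2 * a ^ 2 + |a| * (K * (|a| * n * M)) := by
          refine (abs_add_le _ _).trans ?_
          rw [abs_mul]; gcongr
      _ = K * M * (n ^ 2 + n) * a ^ 2 := by rw [← sq_abs a]; ring
      _ ≤ K * M * (n + 1 : ℕ) ^ 2 * a ^ 2 := by push_cast; gcongr; nlinarith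

end circleLift

theorem iterate_first_order_expansion_general
    (f : ℝ → ℝ) (hper : Function.Periodic f (2 * Real.pi)) (hf : ContDiff ℝ 2 f)
    (q : ℕ) :
    ∃ C > 0, ∃ a₀ > 0, ∀ a : ℝ, |a| ≤ a₀ → ∀ r x : ℝ,
      |(circleLift f r a)^[q] x - x - 2 * Real.pi * r * q
          - a * ∑ k ∈ Finset.range q, f (x + 2 * Real.pi * k * r)| ≤ C * a ^ 2 := by
  have h2π : 2 * π ≠ 0 := two_pi_pos.ne'
  obtain ⟨M, hM⟩ := hper.exists_abs_le_of_continuous h2π hf.continuous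
  obtain ⟨K, hK⟩ := hper.exists_lipschitzWith_of_contDiff h2π (hf.of_le (by norm_num))
  have hM0 : 0 ≤ M := (abs_nonneg _).trans (hM 0)
  refine ⟨K * M * q ^ 2 + 1, by positivity, 1, one_pos, fun a _ r x => ?_⟩
  calc _ ≤ K * M * q ^ 2 * a ^ 2 := circleLift.iterate_first_order_abs_le hM hK r a x q
    _ ≤ (K * M * q ^ 2 + 1) * a ^ 2 := by nlinarith [sq_nonneg a]

/-- First-order expansion of the `q`-th iterate of the lift `x ↦ x + 2πr + a f(x)` in the
parameter `a`, with a uniform quadratic error term. -/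
theorem iterate_first_order_expansion
    (f : ℝ → ℝ) (hper : Function.Periodic f (2 * Real.pi)) (hf : ContDiff ℝ 2 f)
    (q : ℕ) (hq : 1 ≤ q) :
    ∃ C > 0, ∃ a₀ > 0, ∀ a : ℝ, |a| ≤ a₀ → ∀ r x : ℝ,
      |(circleLift f r a)^[q] x - x - 2 * Real.pi * r * q
          - a * ∑ k ∈ Finset.range q, f (x + 2 * Real.pi * k * r)| ≤ C * a ^ 2 :=
  iterate_first_order_expansion_general f hper hf q
end

section
/- For every integer n ≥ 1, every δ > 0, every y ∈ ℝ, and every real number s with |s| ≤ (cosh(nδ) + 1)/2, one has |cos(n(y + iδ)) − s| ≥ (cosh(nδ) − 1)/2. (In other words, the distance in ℂ between the ellipse {cos(n(y + iδ)) : y ∈ ℝ} and the real segment [−(cosh(nδ)+1)/2, (cosh(nδ)+1)/2] is at least (cosh(nδ) − 1)/2.) -/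
/-!
Write `z = x + t i`, so that `cos z = cos x cosh t - i sin x sinh t` runs over an ellipse with
semi-axes `C = cosh t` and `sinh t`. For real `s`, eliminating `sin x` and `sinh t` gives
`|cos z - s|² = (cos x - C s)² + (C² - 1)(1 - s²)`.
If `C |s| ≥ 1`, the first square is at least `(C |s| - 1)²` and the sum collapses to `(C - |s|)²`,
which is at least `((C - 1)/2)²` on the segment. If `C |s| < 1`, the second term alone is at least
`(C² - 1)²/C² ≥ ((C - 1)/2)²`.
-/

lemma sq_half_sub_one_le_of_nonneg {a C s : ℝ} (ha : |a| ≤ 1) (hC : 1 ≤ C) (hs₀ : 0 ≤ s)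
    (hs : s ≤ (C + 1) / 2) :
    ((C - 1) / 2) ^ 2 ≤ (a - C * s) ^ 2 + (C ^ 2 - 1) * (1 - s ^ 2) := by
  obtain ⟨ha₁, ha₂⟩ := abs_le.mp ha
  rcases le_or_gt 1 (C * s) with hCs | hCs
  · have hfar : (C * s - 1) ^ 2 ≤ (a - C * s) ^ 2 := by nlinarith
    calc ((C - 1) / 2) ^ 2 ≤ (C - s) ^ 2 := by nlinarith
      _ = (C * s - 1) ^ 2 + (C ^ 2 - 1) * (1 - s ^ 2) := by ring
      _ ≤ _ := by gcongr
  · have hCs_sq : C ^ 2 * s ^ 2 ≤ 1 := by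
      rw [← mul_pow]
      exact pow_le_one₀ (by positivity) hCs.le
    have hnear : C ^ 2 * ((C - 1) / 2) ^ 2 ≤ C ^ 2 * ((C ^ 2 - 1) * (1 - s ^ 2)) :=
      calc C ^ 2 * ((C - 1) / 2) ^ 2 ≤ (C ^ 2 - 1) ^ 2 := by nlinarith
        _ ≤ C ^ 2 * ((C ^ 2 - 1) * (1 - s ^ 2)) := by
          have : 0 ≤ (C ^ 2 - 1) * (1 - C ^ 2 * s ^ 2) :=
            mul_nonneg (by nlinarith) (sub_nonneg.mpr hCs_sq)
          linear_combination this
    have := le_of_mul_le_mul_left hnear (by positivity)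
    linarith [sq_nonneg (a - C * s)]

lemma sq_half_sub_one_le {a C s : ℝ} (ha : |a| ≤ 1) (hC : 1 ≤ C) (hs : |s| ≤ (C + 1) / 2) :
    ((C - 1) / 2) ^ 2 ≤ (a - C * s) ^ 2 + (C ^ 2 - 1) * (1 - s ^ 2) := by
  rcases le_total 0 s with hs₀ | hs₀
  · exact sq_half_sub_one_le_of_nonneg ha hC hs₀ (by rwa [abs_of_nonneg hs₀] at hs)
  · have := sq_half_sub_one_le_of_nonneg (a := -a) (by rwa [abs_neg]) hC (neg_nonneg.mpr hs₀)
      (by rwa [abs_of_nonpos hs₀] at hs)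
    linarith [show (-a - C * -s) ^ 2 = (a - C * s) ^ 2 by ring, neg_sq s]

lemma Complex.normSq_cos_add_mul_I_sub_ofReal (x t s : ℝ) :
    Complex.normSq (Complex.cos (x + t * Complex.I) - s)
      = (Real.cos x - Real.cosh t * s) ^ 2 + (Real.cosh t ^ 2 - 1) * (1 - s ^ 2) := by
  have hcos : Complex.cos (x + t * Complex.I) - s
      = ((Real.cos x * Real.cosh t - s : ℝ) : ℂ)
        + ((-(Real.sin x * Real.sinh t) : ℝ) : ℂ) * Complex.I := by
    rw [Complex.cos_add_mul_I]
    push_cast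
    ring
  rw [hcos, Complex.normSq_add_mul_I]
  linear_combination (Real.sinh t ^ 2) * Real.sin_sq_add_cos_sq x
    + (Real.cos x ^ 2 - 1) * Real.cosh_sq t

lemma Complex.half_cosh_sub_one_le_norm_cos_add_mul_I_sub_ofReal (x t : ℝ) {s : ℝ}
    (hs : |s| ≤ (Real.cosh t + 1) / 2) :
    (Real.cosh t - 1) / 2 ≤ ‖Complex.cos (x + t * Complex.I) - s‖ := by
  have hC := Real.one_le_cosh t
  rw [← sq_le_sq₀ (by linarith) (norm_nonneg _), Complex.sq_norm,
    Complex.normSq_cos_add_mul_I_sub_ofReal]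
  exact sq_half_sub_one_le (Real.abs_cos_le_one x) hC hs

theorem cos_ellipse_dist_to_segment_general
    (n : ℕ) (δ : ℝ) (y s : ℝ)
    (hs : |s| ≤ (Real.cosh (n * δ) + 1) / 2) :
    (Real.cosh (n * δ) - 1) / 2
      ≤ ‖Complex.cos ((n : ℂ) * ((y : ℂ) + Complex.I * (δ : ℂ))) - (s : ℂ)‖ := by
  have hz : (n : ℂ) * ((y : ℂ) + Complex.I * (δ : ℂ))
      = ((n * y : ℝ) : ℂ) + ((n * δ : ℝ) : ℂ) * Complex.I := by
    push_cast
    ring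
  rw [hz]
  exact Complex.half_cosh_sub_one_le_norm_cos_add_mul_I_sub_ofReal _ _ hs

/-- The distance in ℂ between the ellipse `{cos(n(y + iδ)) : y ∈ ℝ}` and the real segment
`[-(cosh(nδ)+1)/2, (cosh(nδ)+1)/2]` is at least `(cosh(nδ) - 1)/2`. -/
theorem cos_ellipse_dist_to_segment
    (n : ℕ) (hn : 1 ≤ n) (δ : ℝ) (hδ : 0 < δ) (y s : ℝ)
    (hs : |s| ≤ (Real.cosh (n * δ) + 1) / 2) :
    (Real.cosh (n * δ) - 1) / 2
      ≤ ‖Complex.cos ((n : ℂ) * ((y : ℂ) + Complex.I * (δ : ℂ))) - (s : ℂ)‖ :=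
  cos_ellipse_dist_to_segment_general n δ y s hs
end
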